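/- Let L be a principally generated C-lattice that is a lattice domain, and let a, y, z ∈ L be nonzero with y, z principal and y ≤ a. Then z·(y : a) = (z·y : a). -/

import Mathlib

/-- A multiplicative lattice: a complete lattice (bottom `⊥` playing the role of `0`)
which is a commutative monoid whose identity `1` is the top element, and in which
multiplication distributes over arbitrary joins. -/
class MulLattice (L : Type*) extends CompleteLattice L, CommMonoid L where
  one_eq_top : (1 : L) = ⊤
  mul_sSup : ∀ (a : L) (S : Set L), a * sSup S = ⨆ b ∈ S, a * b

namespace MulLattice

variable {L : Type*} [MulLattice L]

/-- The residual `(y : x) = ⋁ {a | a * x ≤ y}`. -/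
def res (y x : L) : L := sSup {a : L | a * x ≤ y}

/-- `x` is meet-principal: `y ⊓ z * x = ((y : x) ⊓ z) * x` for all `y, z`. -/
def IsMeetPrincipal (x : L) : Prop := ∀ y z : L, y ⊓ z * x = (res y x ⊓ z) * x

/-- `x` is join-principal: `y ⊔ (z : x) = ((y * x ⊔ z) : x)` for all `y, z`. -/
def IsJoinPrincipal (x : L) : Prop := ∀ y z : L, y ⊔ res z x = res (y * x ⊔ z) x

/-- `x` is principal if it is both meet-principal and join-principal. -/
def IsPrincipal (x : L) : Prop := IsMeetPrincipal x ∧ IsJoinPrincipal x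

/-- A prime element: a proper element `p` with `x * y ≤ p → x ≤ p ∨ y ≤ p`. -/
def IsPrime (p : L) : Prop := p ≠ 1 ∧ ∀ x y : L, x * y ≤ p → x ≤ p ∨ y ≤ p

/-- A maximal element: an element maximal in `L - {1}`. -/
def IsMaximal (m : L) : Prop := m ≠ 1 ∧ ∀ b : L, m < b → b = 1

end MulLattice

/-- A principally generated C-lattice: a multiplicative lattice in which `1` is compact,
compact elements are closed under multiplication, every element is a join of compact
elements and every element is a join of principal elements. -/
class PGCLattice (L : Type*) extends MulLattice L where
  top_isCompact : IsCompactElement (⊤ : L)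
  compact_mul : ∀ a b : L, IsCompactElement a →
    IsCompactElement b → IsCompactElement (a * b)
  compactly_generated : ∀ a : L,
    a = sSup {c : L | IsCompactElement c ∧ c ≤ a}
  principally_generated : ∀ a : L,
    a = sSup {x : L | MulLattice.IsPrincipal x ∧ x ≤ a}

namespace MulLattice

variable {L : Type*}

/-- A lattice domain: `0 = ⊥` is a prime element. -/
def IsLatticeDomain (L : Type*) [MulLattice L] : Prop := IsPrime (⊥ : L)

variable [PGCLattice L]

open Classical in
/-- The divisorial (`v`-)closure of `a`: equals `(x : (x : a))` for a nonzero principal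
`x ≤ a` when such an `x` exists (in a lattice domain this is independent of the choice
of `x`), and `⊥` otherwise (in particular `vclos ⊥ = ⊥`). -/
noncomputable def vclos (a : L) : L :=
  if h : ∃ x : L, IsPrincipal x ∧ x ≠ ⊥ ∧ x ≤ a then
    res h.choose (res h.choose a)
  else ⊥

/-- `a` is divisorial if `a = a_v`. -/
def IsDivisorial (a : L) : Prop := vclos a = a

/-- `L` is h-local: every nonzero prime is below a unique maximal element and
every nonzero element is below only finitely many maximal elements. -/
def IsHLocal (L : Type*) [PGCLattice L] : Prop :=
  (∀ r : L, r ≠ ⊥ → IsPrime r → ∃! m : L, IsMaximal m ∧ r ≤ m) ∧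
  (∀ b : L, b ≠ ⊥ → {m : L | IsMaximal m ∧ b ≤ m}.Finite)

end MulLattice

/-!
Let `d = (zy : a)`. Since `dy ≤ da ≤ zy` and the join-principal `y` can be cancelled in a
lattice domain, `d ≤ z`; as `z` is meet-principal, `d = ez` with `e = (d : z)`. Then
`eaz = da ≤ yz`, and cancelling `z` gives `ea ≤ y`, i.e. `e ≤ (y : a)`, so `d ≤ z(y : a)`.
The reverse inequality holds in any multiplicative lattice.
-/

namespace MulLattice

variable {L : Type*} [MulLattice L]

instance : MulLeftMono L where
  elim a b c hbc := by
    change a * b ≤ a * c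
    have hsup : a * sSup ({b, c} : Set L) = ⨆ x ∈ ({b, c} : Set L), a * x := mul_sSup a _
    rw [sSup_pair, sup_eq_right.mpr hbc] at hsup
    rw [hsup]
    exact le_biSup _ (by simp)

theorem res_mul_le (y x : L) : res y x * x ≤ y := by
  rw [res, mul_comm, mul_sSup]
  exact iSup₂_le fun b hb => by rw [mul_comm]; exact hb

theorem le_res_iff {u x y : L} : u ≤ res y x ↔ u * x ≤ y :=
  ⟨fun h => (mul_le_mul_left h x).trans (res_mul_le y x), fun h => le_sSup h⟩

theorem res_mono {y y' : L} (x : L) (h : y ≤ y') : res y x ≤ res y' x :=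
  le_res_iff.mpr ((res_mul_le y x).trans h)

theorem res_bot_eq_bot (hL : IsLatticeDomain L) {x : L} (hx : x ≠ ⊥) : res ⊥ x = ⊥ :=
  le_bot_iff.mp <| sSup_le fun u hu =>
    (hL.2 u x hu).resolve_right fun h => hx (le_bot_iff.mp h)

theorem IsJoinPrincipal.le_of_mul_le_mul (hL : IsLatticeDomain L) {x : L} (hx : x ≠ ⊥)
    (hp : IsJoinPrincipal x) {u v : L} (h : u * x ≤ v * x) : u ≤ v := by
  have hu := hp u ⊥
  have hv := hp v ⊥
  rw [res_bot_eq_bot hL hx, sup_bot_eq, sup_bot_eq] at hu hv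
  rw [hu, hv]
  exact res_mono x h

theorem IsMeetPrincipal.inf_eq_res_mul {x : L} (hp : IsMeetPrincipal x) (d : L) :
    d ⊓ x = res d x * x := by
  have h := hp d 1
  rwa [one_mul, one_eq_top, inf_top_eq] at h

end MulLattice

open MulLattice

theorem stmt0_general {L : Type*} [PGCLattice L] (hL : IsLatticeDomain L)
    (a y z : L) (hy0 : y ≠ ⊥) (hz0 : z ≠ ⊥)
    (hy : IsPrincipal y) (hz : IsPrincipal z) (hya : y ≤ a) :
    z * res y a = res (z * y) a := by
  refine le_antisymm (le_res_iff.mpr ?_) ?_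
  · rw [mul_assoc]
    exact mul_le_mul_right (res_mul_le y a) z
  set d := res (z * y) a
  have hda : d * a ≤ z * y := res_mul_le _ _
  have hdz : d ≤ z :=
    hy.2.le_of_mul_le_mul hL hy0 ((mul_le_mul_right hya d).trans hda)
  set e := res d z
  have hd : d = e * z := by rw [← hz.1.inf_eq_res_mul, inf_eq_left.mpr hdz]
  have hey : e ≤ res y a := by
    refine le_res_iff.mpr (hz.2.le_of_mul_le_mul hL hz0 ?_)
    calc e * a * z = d * a := by rw [hd, mul_right_comm]
      _ ≤ y * z := mul_comm z y ▸ hda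
  calc d = e * z := hd
    _ ≤ res y a * z := mul_le_mul_left hey z
    _ = z * res y a := mul_comm _ _

theorem stmt0 {L : Type*} [PGCLattice L] (hL : IsLatticeDomain L)
    (a y z : L) (ha : a ≠ ⊥) (hy0 : y ≠ ⊥) (hz0 : z ≠ ⊥)
    (hy : IsPrincipal y) (hz : IsPrincipal z) (hya : y ≤ a) :
    z * res y a = res (z * y) a :=
  stmt0_general hL a y z hy0 hz0 hy hz hya
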